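/- Let G be a Lie group with Lie algebra 𝔤 carrying an Ad-invariant inner product, embedded in GL(n,ℝ). For smooth maps f₁, f₂, f₃ : M → G, the ⟨·,·⟩-valued 2-form cocycle c(f₁,f₂) = ⟨f₁*θ_l ∧ f₂*θ_r⟩ satisfies the group 2-cocycle identity c(f₁,f₂) + c(f₁f₂, f₃) = c(f₁, f₂f₃) + c(f₂,f₃). -/

import Mathlib

attribute [local instance] Matrix.normedAddCommGroup Matrix.normedSpace
open scoped Manifold

noncomputable instance matrixChartedSpaceSelf (n : ℕ) :
    @ChartedSpace (Matrix (Fin n) (Fin n) ℝ)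
      (PseudoMetricSpace.toUniformSpace : UniformSpace (Matrix (Fin n) (Fin n) ℝ)).toTopologicalSpace
      (Matrix (Fin n) (Fin n) ℝ) instTopologicalSpaceMatrix :=
  @chartedSpaceSelf _
    (PseudoMetricSpace.toUniformSpace : UniformSpace (Matrix (Fin n) (Fin n) ℝ)).toTopologicalSpace

section
variable {n : ℕ}
variable {EM : Type*} [NormedAddCommGroup EM] [NormedSpace ℝ EM]
  {HM : Type*} [TopologicalSpace HM] (I : ModelWithCorners ℝ EM HM)
  {M : Type*} [TopologicalSpace M] [ChartedSpace HM M]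

noncomputable def mdiff (f : M → Matrix (Fin n) (Fin n) ℝ) (x : M)
    (u : TangentSpace I x) : Matrix (Fin n) (Fin n) ℝ :=
  mfderiv I 𝓘(ℝ, Matrix (Fin n) (Fin n) ℝ) f x u

/-- The 2-form cocycle `c(f₁,f₂) = ⟨f₁*θ_l ∧ f₂*θ_r⟩` on a smooth manifold `M`,
where `θ_l = g⁻¹ dg`, `θ_r = dg g⁻¹` are the Maurer–Cartan forms, evaluated at
`x : M` on tangent vectors `u v`:
`c(f₁,f₂)_x(u,v) = ⟨f₁(x)⁻¹ df₁(u), df₂(v) f₂(x)⁻¹⟩ − (u ↔ v)`. -/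
noncomputable def mcCocycle
    (B : Matrix (Fin n) (Fin n) ℝ →ₗ[ℝ] Matrix (Fin n) (Fin n) ℝ →ₗ[ℝ] ℝ)
    (f₁ f₂ : M → Matrix (Fin n) (Fin n) ℝ) (x : M) (u v : TangentSpace I x) : ℝ :=
  B ((f₁ x)⁻¹ * mdiff I f₁ x u)
      (mdiff I f₂ x v * (f₂ x)⁻¹) -
    B ((f₁ x)⁻¹ * mdiff I f₁ x v)
      (mdiff I f₂ x u * (f₂ x)⁻¹)

/-! The pulled-back Maurer–Cartan forms obey the product rules
`θ_l(f g) = g⁻¹ θ_l(f) g + θ_l(g)` and `θ_r(g h) = θ_r(g) + g θ_r(h) g⁻¹`.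
Expanding both sides of the cocycle identity with them leaves, after cancellation,
`B(f₂⁻¹ θ_l(f₁) f₂, θ_r(f₃))` on the left against `B(θ_l(f₁), f₂ θ_r(f₃) f₂⁻¹)` on the
right, and these agree by Ad-invariance of `B` at `f₂(x) ∈ G`. -/

theorem ContinuousLinearMap.mfderiv_of_bilinear_apply
    {E₁ E₂ F : Type*} [NormedAddCommGroup E₁] [NormedSpace ℝ E₁]
    [NormedAddCommGroup E₂] [NormedSpace ℝ E₂] [NormedAddCommGroup F] [NormedSpace ℝ F]
    (B : E₁ →L[ℝ] E₂ →L[ℝ] F) {u : M → E₁} {v : M → E₂} {x : M}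
    (hu : MDifferentiableAt I 𝓘(ℝ, E₁) u x) (hv : MDifferentiableAt I 𝓘(ℝ, E₂) v x)
    (w : TangentSpace I x) :
    mfderiv I 𝓘(ℝ, F) (fun y => B (u y) (v y)) x w =
      B (mfderiv I 𝓘(ℝ, E₁) u x w) (v x) + B (u x) (mfderiv I 𝓘(ℝ, E₂) v x w) := by
  have hpair : HasMFDerivAt I 𝓘(ℝ, E₁ × E₂) (fun y => (u y, v y)) x
      ((mfderiv I 𝓘(ℝ, E₁) u x).prod (mfderiv I 𝓘(ℝ, E₂) v x)) :=
    hu.hasMFDerivAt.prodMk hv.hasMFDerivAt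
  have hB := (B.isBoundedBilinearMap.hasFDerivAt (u x, v x)).hasMFDerivAt.comp x hpair
  exact (congrArg (fun L => L w) hB.mfderiv).trans
    ((B.isBoundedBilinearMap.deriv_apply _ _).trans (add_comm _ _))

theorem mdiff_mul {f g : M → Matrix (Fin n) (Fin n) ℝ} {x : M}
    (hf : MDifferentiableAt I 𝓘(ℝ, Matrix (Fin n) (Fin n) ℝ) f x)
    (hg : MDifferentiableAt I 𝓘(ℝ, Matrix (Fin n) (Fin n) ℝ) g x) (u : TangentSpace I x) :
    mdiff I (fun y => f y * g y) x u = mdiff I f x u * g x + f x * mdiff I g x u :=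
  (LinearMap.mul ℝ (Matrix (Fin n) (Fin n) ℝ)).toContinuousBilinearMap.mfderiv_of_bilinear_apply
    I hf hg u

noncomputable def leftMaurerCartan (f : M → Matrix (Fin n) (Fin n) ℝ) (x : M)
    (u : TangentSpace I x) : Matrix (Fin n) (Fin n) ℝ :=
  (f x)⁻¹ * mdiff I f x u

noncomputable def rightMaurerCartan (f : M → Matrix (Fin n) (Fin n) ℝ) (x : M)
    (u : TangentSpace I x) : Matrix (Fin n) (Fin n) ℝ :=
  mdiff I f x u * (f x)⁻¹

theorem mcCocycle_eq_sub
    (B : Matrix (Fin n) (Fin n) ℝ →ₗ[ℝ] Matrix (Fin n) (Fin n) ℝ →ₗ[ℝ] ℝ)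
    (f₁ f₂ : M → Matrix (Fin n) (Fin n) ℝ) (x : M) (u v : TangentSpace I x) :
    mcCocycle I B f₁ f₂ x u v =
      B (leftMaurerCartan I f₁ x u) (rightMaurerCartan I f₂ x v) -
        B (leftMaurerCartan I f₁ x v) (rightMaurerCartan I f₂ x u) :=
  rfl

theorem leftMaurerCartan_mul {f g : M → Matrix (Fin n) (Fin n) ℝ} {x : M}
    (hf : MDifferentiableAt I 𝓘(ℝ, Matrix (Fin n) (Fin n) ℝ) f x)
    (hg : MDifferentiableAt I 𝓘(ℝ, Matrix (Fin n) (Fin n) ℝ) g x) (hfx : IsUnit (f x))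
    (u : TangentSpace I x) :
    leftMaurerCartan I (fun y => f y * g y) x u =
      (g x)⁻¹ * leftMaurerCartan I f x u * g x + leftMaurerCartan I g x u := by
  rw [Matrix.isUnit_iff_isUnit_det] at hfx
  simp only [leftMaurerCartan, mdiff_mul I hf hg, Matrix.mul_inv_rev, mul_add,
    Matrix.mul_assoc, Matrix.nonsing_inv_mul_cancel_left _ _ hfx]

theorem rightMaurerCartan_mul {f g : M → Matrix (Fin n) (Fin n) ℝ} {x : M}
    (hf : MDifferentiableAt I 𝓘(ℝ, Matrix (Fin n) (Fin n) ℝ) f x)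
    (hg : MDifferentiableAt I 𝓘(ℝ, Matrix (Fin n) (Fin n) ℝ) g x) (hgx : IsUnit (g x))
    (u : TangentSpace I x) :
    rightMaurerCartan I (fun y => f y * g y) x u =
      rightMaurerCartan I f x u + f x * rightMaurerCartan I g x u * (f x)⁻¹ := by
  rw [Matrix.isUnit_iff_isUnit_det] at hgx
  simp only [rightMaurerCartan, mdiff_mul I hf hg, Matrix.mul_inv_rev, add_mul,
    ← Matrix.mul_assoc, Matrix.mul_nonsing_inv_cancel_right _ _ hgx]

theorem Units.apply_inv_conj_eq_apply_conj {R β : Type*} [Monoid R] (B : R → R → β) (g : Rˣ)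
    (hB : ∀ a b, B (g * a * ↑g⁻¹) (g * b * ↑g⁻¹) = B a b) (X Y : R) :
    B (↑g⁻¹ * X * g) Y = B X (g * Y * ↑g⁻¹) := by
  simpa [mul_assoc] using (hB (↑g⁻¹ * X * g) Y).symm

theorem mcCocycle_identity
    (G : Subgroup (Matrix (Fin n) (Fin n) ℝ)ˣ)
    (B : Matrix (Fin n) (Fin n) ℝ →ₗ[ℝ] Matrix (Fin n) (Fin n) ℝ →ₗ[ℝ] ℝ)
    (hBinv : ∀ g ∈ G, ∀ a b,
      B ((g : Matrix (Fin n) (Fin n) ℝ) * a * ((g⁻¹ : (Matrix (Fin n) (Fin n) ℝ)ˣ) : Matrix (Fin n) (Fin n) ℝ))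
        ((g : Matrix (Fin n) (Fin n) ℝ) * b * ((g⁻¹ : (Matrix (Fin n) (Fin n) ℝ)ˣ) : Matrix (Fin n) (Fin n) ℝ)) = B a b)
    (f₁ f₂ f₃ : M → Matrix (Fin n) (Fin n) ℝ)
    (hf₁ : ContMDiff I 𝓘(ℝ, Matrix (Fin n) (Fin n) ℝ) (⊤ : ℕ∞) f₁)
    (hf₂ : ContMDiff I 𝓘(ℝ, Matrix (Fin n) (Fin n) ℝ) (⊤ : ℕ∞) f₂)
    (hf₃ : ContMDiff I 𝓘(ℝ, Matrix (Fin n) (Fin n) ℝ) (⊤ : ℕ∞) f₃)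
    (hf₁G : ∀ x, ∃ g ∈ G, f₁ x = (g : Matrix (Fin n) (Fin n) ℝ))
    (hf₂G : ∀ x, ∃ g ∈ G, f₂ x = (g : Matrix (Fin n) (Fin n) ℝ))
    (hf₃G : ∀ x, ∃ g ∈ G, f₃ x = (g : Matrix (Fin n) (Fin n) ℝ)) :
    ∀ (x : M) (u v : TangentSpace I x),
      mcCocycle I B f₁ f₂ x u v +
        mcCocycle I B (fun y => f₁ y * f₂ y) f₃ x u v =
      mcCocycle I B f₁ (fun y => f₂ y * f₃ y) x u v +
        mcCocycle I B f₂ f₃ x u v := by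
  intro x u v
  have hd₁ := (hf₁ x).mdifferentiableAt (by simp)
  have hd₂ := (hf₂ x).mdifferentiableAt (by simp)
  have hd₃ := (hf₃ x).mdifferentiableAt (by simp)
  obtain ⟨g₁, -, e₁⟩ := hf₁G x
  obtain ⟨g₂, hg₂, e₂⟩ := hf₂G x
  obtain ⟨g₃, -, e₃⟩ := hf₃G x
  simp only [mcCocycle_eq_sub, leftMaurerCartan_mul I hd₁ hd₂ (e₁ ▸ g₁.isUnit),
    rightMaurerCartan_mul I hd₂ hd₃ (e₃ ▸ g₃.isUnit), map_add, LinearMap.add_apply]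
  rw [e₂, ← Matrix.coe_units_inv,
    Units.apply_inv_conj_eq_apply_conj (fun a b => B a b) g₂ (hBinv g₂ hg₂),
    Units.apply_inv_conj_eq_apply_conj (fun a b => B a b) g₂ (hBinv g₂ hg₂)]
  ring

end
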